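/- Let p > 1 be an odd integer and set m = 2·⌊(p−3)/6⌋ + 1, where ⌊z⌋ denotes the greatest integer not exceeding z. Then I_p ⊆ [ 3m(p−2)/p², 3m(p+2)/p² ]. -/

import Mathlib

def Ip (p : ℕ) : Set ℝ :=
  if p % 3 = 0 then Set.Icc (1 - 2 / (p : ℝ)) (1 + 2 / (p : ℝ))
  else if p % 3 = 1 then
    Set.Icc (1 - 3 / (p : ℝ) - 4 / (p : ℝ) ^ 2) (1 - 2 / (p : ℝ) - 8 / (p : ℝ) ^ 2)
  else Set.Icc (1 - 4 / (p : ℝ) + 4 / (p : ℝ) ^ 2) (1 - 4 / (p : ℝ) ^ 2)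

theorem Ip_subset_sum_interval (p : ℕ) (hp1 : 1 < p) (hpodd : Odd p) :
    Ip p ⊆ Set.Icc ((3 * (2 * ((p - 3) / 6) + 1 : ℕ) * ((p : ℝ) - 2)) / (p : ℝ) ^ 2)
                    ((3 * (2 * ((p - 3) / 6) + 1 : ℕ) * ((p : ℝ) + 2)) / (p : ℝ) ^ 2) := by
  have hodd := Nat.odd_iff.mp hpodd
  have hp : (1:ℝ) < p := by exact_mod_cast hp1
  have hp0 : (0:ℝ) < p := by linarith
  have hp2 : (0:ℝ) < (p:ℝ)^2 := by positivity
  have hr : p % 6 = 1 ∨ p % 6 = 3 ∨ p % 6 = 5 := by omega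
  rcases hr with hr | hr | hr
  · have h3 : p % 3 = 1 := by omega
    have h7 : 7 ≤ p := by omega
    have h7' : (7:ℝ) ≤ p := by exact_mod_cast h7
    have hn : 3 * (2 * ((p - 3) / 6) + 1) + 4 = p := by omega
    have hnr : 3 * ((2 * ((p - 3) / 6) + 1 : ℕ) : ℝ) = (p:ℝ) - 4 := by
      have : 3 * ((2 * ((p - 3) / 6) + 1 : ℕ) : ℝ) + 4 = (p:ℝ) := by exact_mod_cast hn
      linarith
    rw [Ip, if_neg (by omega), if_pos h3, hnr]
    apply Set.Icc_subset_Icc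
    · rw [div_le_iff₀ hp2]
      have e : (1 - 3 / (p:ℝ) - 4 / (p:ℝ)^2) * (p:ℝ)^2 = (p:ℝ)^2 - 3*p - 4 := by
        field_simp
      rw [e]; nlinarith
    · rw [le_div_iff₀ hp2]
      have e : (1 - 2 / (p:ℝ) - 8 / (p:ℝ)^2) * (p:ℝ)^2 = (p:ℝ)^2 - 2*p - 8 := by
        field_simp
      rw [e]; nlinarith
  · have h3 : p % 3 = 0 := by omega
    have hn : 3 * (2 * ((p - 3) / 6) + 1) = p := by omega
    have hnr : 3 * ((2 * ((p - 3) / 6) + 1 : ℕ) : ℝ) = (p:ℝ) := by exact_mod_cast hn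
    rw [Ip, if_pos h3, hnr]
    apply Set.Icc_subset_Icc
    · rw [div_le_iff₀ hp2]
      have e : (1 - 2 / (p:ℝ)) * (p:ℝ)^2 = (p:ℝ)^2 - 2*p := by field_simp
      rw [e]; nlinarith
    · rw [le_div_iff₀ hp2]
      have e : (1 + 2 / (p:ℝ)) * (p:ℝ)^2 = (p:ℝ)^2 + 2*p := by field_simp
      rw [e]; nlinarith
  · have h3 : p % 3 = 2 := by omega
    have hn : 3 * (2 * ((p - 3) / 6) + 1) + 2 = p := by omega
    have hnr : 3 * ((2 * ((p - 3) / 6) + 1 : ℕ) : ℝ) = (p:ℝ) - 2 := by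
      have : 3 * ((2 * ((p - 3) / 6) + 1 : ℕ) : ℝ) + 2 = (p:ℝ) := by exact_mod_cast hn
      linarith
    rw [Ip, if_neg (by omega), if_neg (by omega), hnr]
    apply Set.Icc_subset_Icc
    · rw [div_le_iff₀ hp2]
      have e : (1 - 4 / (p:ℝ) + 4 / (p:ℝ)^2) * (p:ℝ)^2 = (p:ℝ)^2 - 4*p + 4 := by
        field_simp
      rw [e]; nlinarith
    · rw [le_div_iff₀ hp2]
      have e : (1 - 4 / (p:ℝ)^2) * (p:ℝ)^2 = (p:ℝ)^2 - 4 := by field_simp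
      rw [e]; nlinarith
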